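/- Let w be a cyclic word of length s = et with irreducible root w' of length t, let a divide s, and set g = gcd(a, t). Then for every a-equivalence class u with v_a^1(u) = w, the maximal e' with u an e'-th power in the a-equivalence classes equals eg/a. -/
import Mathlib


/-- One step of cyclic permutation of blocks of `a` letters (the relation `~_a`);
`BlockCyc n 1` is cyclic rotation of single letters. -/
def BlockCyc (n a : ℕ) (w w' : List (Fin n)) : Prop :=
  ∃ u v : List (Fin n), a ∣ u.length ∧ a ∣ v.length ∧ w = u ++ v ∧ w' = v ++ u

/-- The `e`-fold concatenation power `w^e` of a word. -/
def wpow {n : ℕ} (w : List (Fin n)) (e : ℕ) : List (Fin n) :=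
  (List.replicate e w).flatten

/-- A cyclic word is irreducible if it is not a proper power. -/
def IrredCyc (n : ℕ) (w' : List (Fin n)) : Prop :=
  w' ≠ [] ∧ ∀ (u : List (Fin n)) (f : ℕ), BlockCyc n 1 w' (wpow u f) → f = 1

variable {n : ℕ}

lemma wpow_zero (w : List (Fin n)) : wpow w 0 = [] := rfl

lemma wpow_succ (w : List (Fin n)) (e : ℕ) : wpow w (e+1) = w ++ wpow w e := rfl

lemma wpow_one (w : List (Fin n)) : wpow w 1 = w := by simp [wpow]

lemma length_wpow (w : List (Fin n)) (e : ℕ) : (wpow w e).length = e * w.length := by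
  induction e with
  | zero => simp [wpow_zero]
  | succ m ih => simp [wpow_succ, ih]; ring

lemma wpow_add (w : List (Fin n)) (m k : ℕ) : wpow w (m+k) = wpow w m ++ wpow w k := by
  induction m with
  | zero => simp [wpow_zero]
  | succ m ih => rw [Nat.succ_add, wpow_succ, wpow_succ, ih, List.append_assoc]

lemma wpow_mul (w : List (Fin n)) (m k : ℕ) : wpow (wpow w m) k = wpow w (m*k) := by
  induction k with
  | zero => simp [wpow_zero]
  | succ k ih => rw [wpow_succ, ih, Nat.mul_succ, Nat.add_comm, wpow_add]

lemma wpow_swap (x y : List (Fin n)) (f : ℕ) :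
    wpow (x ++ y) f ++ x = x ++ wpow (y ++ x) f := by
  induction f with
  | zero => simp [wpow_zero]
  | succ f ih =>
      rw [wpow_succ, wpow_succ, List.append_assoc, ih]
      simp [List.append_assoc]

lemma rotate_wpow_le (p : List (Fin n)) (r e : ℕ) (hr : r ≤ p.length) :
    (wpow p e).rotate r = wpow (p.rotate r) e := by
  cases e with
  | zero => simp [wpow_zero]
  | succ e =>
      have hr' : r ≤ (wpow p (e+1)).length := by
        rw [length_wpow]; calc r ≤ p.length := hr
          _ ≤ (e+1) * p.length := Nat.le_mul_of_pos_left _ (Nat.succ_pos e)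
      rw [List.rotate_eq_drop_append_take hr', List.rotate_eq_drop_append_take hr]
      have hp : p = p.take r ++ p.drop r := (List.take_append_drop r p).symm
      have htake : (wpow p (e+1)).take r = p.take r := by
        rw [wpow_succ, List.take_append_of_le_length hr]
      have hdrop : (wpow p (e+1)).drop r = p.drop r ++ wpow p e := by
        rw [wpow_succ, List.drop_append_of_le_length hr]
      rw [htake, hdrop, List.append_assoc]
      conv_lhs => rw [show wpow p e = wpow (p.take r ++ p.drop r) e by rw [← hp]]
      rw [wpow_swap, ← List.append_assoc, ← wpow_succ]

lemma rotate_wpow (p : List (Fin n)) (hp : p ≠ []) (e j : ℕ) :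
    (wpow p e).rotate j = wpow (p.rotate (j % p.length)) e := by
  have ht : 0 < p.length := List.length_pos_iff.mpr hp
  conv_lhs => rw [← Nat.div_add_mod j p.length, ← List.rotate_rotate]
  have h1 : (wpow p e).rotate (p.length * (j / p.length)) = wpow p e := by
    induction (j / p.length) with
    | zero => simp
    | succ k ih =>
        rw [Nat.mul_succ, ← List.rotate_rotate, ih, rotate_wpow_le p _ e le_rfl,
          List.rotate_length]
  rw [h1, rotate_wpow_le p _ e (Nat.le_of_lt (Nat.mod_lt _ ht))]

lemma comm_wpow : ∀ (N : ℕ) (x y : List (Fin n)), x.length + y.length ≤ N →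
    x ++ y = y ++ x → ∃ z k l, x = wpow z k ∧ y = wpow z l := by
  intro N
  induction N with
  | zero =>
      intro x y hlen _
      have hx : x = [] := by
        have := Nat.le_zero.mp hlen
        exact List.length_eq_zero_iff.mp (by omega)
      have hy : y = [] := by
        have := Nat.le_zero.mp hlen
        exact List.length_eq_zero_iff.mp (by omega)
      exact ⟨[], 0, 0, by simp [hx, wpow_zero], by simp [hy, wpow_zero]⟩
  | succ N ih =>
      intro x y hlen hcomm
      rcases eq_or_ne x [] with hx | hx
      · exact ⟨y, 0, 1, by simp [hx, wpow_zero], by simp [wpow_one]⟩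
      rcases eq_or_ne y [] with hy | hy
      · exact ⟨x, 1, 0, by simp [wpow_one], by simp [hy, wpow_zero]⟩
      have hxpos : 0 < x.length := List.length_pos_iff.mpr hx
      have hypos : 0 < y.length := List.length_pos_iff.mpr hy
      rcases le_total x.length y.length with hle | hle
      · -- x is a prefix of y
        have hxy : x = y.take x.length := by
          have h3 := congrArg (fun l => List.take x.length l) hcomm
          simpa [List.take_left, List.take_append_of_le_length hle] using h3
        set d := y.drop x.length with hd
        have hy' : y = x ++ d := by conv_lhs => rw [← List.take_append_drop x.length y, ← hxy]
        have hcomm' : x ++ d = d ++ x := by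
          have : x ++ (x ++ d) = (x ++ d) ++ x := by rw [← hy', hcomm]
          rw [List.append_assoc] at this
          exact List.append_cancel_left this
        have hlen' : x.length + d.length ≤ N := by
          have hdl : d.length = y.length - x.length := by simp [hd]
          omega
        obtain ⟨z, k, l, hzx, hzd⟩ := ih x d hlen' hcomm'
        exact ⟨z, k, k + l, hzx, by rw [hy', hzx, hzd, wpow_add]⟩
      · -- y is a prefix of x
        have hxy : y = x.take y.length := by
          have h3 := congrArg (fun l => List.take y.length l) hcomm.symm
          simpa [List.take_left, List.take_append_of_le_length hle] using h3
        set d := x.drop y.length with hd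
        have hx' : x = y ++ d := by conv_lhs => rw [← List.take_append_drop y.length x, ← hxy]
        have hcomm' : y ++ d = d ++ y := by
          have : y ++ (y ++ d) = (y ++ d) ++ y := by rw [← hx', hcomm]
          rw [List.append_assoc] at this
          exact List.append_cancel_left this
        have hlen' : y.length + d.length ≤ N := by
          have hdl : d.length = x.length - y.length := by simp [hd]
          omega
        obtain ⟨z, k, l, hzy, hzd⟩ := ih y d hlen' hcomm'
        exact ⟨z, k + l, k, by rw [hx', hzy, hzd, wpow_add], hzy⟩

lemma wpow_inj (A B : List (Fin n)) (f : ℕ) (hf : 0 < f) (hlen : A.length = B.length)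
    (h : wpow A f = wpow B f) : A = B := by
  obtain ⟨f, rfl⟩ := Nat.exists_eq_succ_of_ne_zero hf.ne'
  have h1 : (wpow A (f+1)).take A.length = A := by
    rw [wpow_succ, List.take_left]
  have h2 : (wpow B (f+1)).take B.length = B := by
    rw [wpow_succ, List.take_left]
  rw [← h1, h, hlen, h2]

lemma wpow_comm_of_le (q v : List (Fin n)) (e f : ℕ) (he : 0 < e) (hf : 0 < f)
    (hle : q.length ≤ v.length) (h : wpow q e = wpow v f) : q ++ v = v ++ q := by
  rcases eq_or_ne q [] with hq | hq
  · simp [hq]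
  obtain ⟨e', rfl⟩ := Nat.exists_eq_succ_of_ne_zero he.ne'
  obtain ⟨f', rfl⟩ := Nat.exists_eq_succ_of_ne_zero hf.ne'
  have hqv : q = v.take q.length := by
    have h3 := congrArg (fun l => List.take q.length l) h
    simpa [wpow_succ, List.take_left, List.take_append_of_le_length hle] using h3
  set d := v.drop q.length with hd
  have hv : v = q ++ d := by conv_lhs => rw [← List.take_append_drop q.length v, ← hqv]
  have key : wpow (q ++ d) (f'+1) = wpow (d ++ q) (f'+1) := by
    have h1 : q ++ wpow q (e'+1) = wpow q (e'+1) ++ q := by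
      rw [← wpow_succ]
      have : wpow q (e'+1+1) = wpow q (e'+1) ++ wpow q 1 := wpow_add q (e'+1) 1
      rw [this, wpow_one]
    rw [h, hv] at h1
    rw [wpow_swap] at h1
    exact List.append_cancel_left h1
  have hqd : q ++ d = d ++ q := by
    apply wpow_inj _ _ _ (Nat.succ_pos f') (by simp [Nat.add_comm]) key
  rw [hv, List.append_assoc, ← hqd]

lemma wpow_comm (q v : List (Fin n)) (e f : ℕ) (he : 0 < e) (hf : 0 < f)
    (h : wpow q e = wpow v f) : q ++ v = v ++ q := by
  rcases le_total q.length v.length with hle | hle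
  · exact wpow_comm_of_le q v e f he hf hle h
  · exact (wpow_comm_of_le v q f e hf he hle h.symm).symm

/-- with `w = (w')^e`, `w'` irreducible of length `t`, `s = e·t`,
`a ∣ s` and `g = gcd(a,t)`: for every `a`-equivalence class `u` with
`v_a^1(u) = w`, the largest `e'` such that `u ~_a (u')^{e'}` for some word `u'`
of length divisible by `a` equals `e·g/a`. -/
theorem stmt6 (n a : ℕ) (ha : 0 < a) (w w' : List (Fin n)) (e t s : ℕ)
    (ht : w'.length = t) (hirr : IrredCyc n w') (he : 0 < e)
    (hw : w = wpow w' e) (hs : s = e * t) (hdvd : a ∣ s)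
    (u : List (Fin n)) (hu : a ∣ u.length) (huw : BlockCyc n 1 u w) :
    IsGreatest {e' : ℕ | ∃ u' : List (Fin n), a ∣ u'.length ∧
      BlockCyc n a u (wpow u' e')} (e * Nat.gcd a t / a) := by
  obtain ⟨hw'ne, hirr2⟩ := hirr
  have htpos : 0 < t := ht ▸ List.length_pos_iff.mpr hw'ne
  set g := Nat.gcd a t with hg
  have hga : g ∣ a := Nat.gcd_dvd_left a t
  have hgt : g ∣ t := Nat.gcd_dvd_right a t
  have hgpos : 0 < g := Nat.gcd_pos_of_pos_right a htpos
  obtain ⟨a', ha'⟩ := hga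
  obtain ⟨t', ht'⟩ := hgt
  have ha'' : a / g = a' := by rw [ha', Nat.mul_div_cancel_left _ hgpos]
  have ht'' : t / g = t' := by rw [ht', Nat.mul_div_cancel_left _ hgpos]
  have h1 : a ∣ e * t := by rw [← hs]; exact hdvd
  obtain ⟨c₀, hcc⟩ := h1
  have h5 : e * t' = a' * c₀ := by
    have h6 : g * (e * t') = g * (a' * c₀) := by
      calc g * (e * t') = e * t := by rw [ht']; ring
        _ = a * c₀ := hcc
        _ = g * (a' * c₀) := by rw [ha']; ring
    exact Nat.eq_of_mul_eq_mul_left hgpos h6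
  have hco : Nat.Coprime a' t' := by
    have h7 := Nat.coprime_div_gcd_div_gcd (m := a) (n := t) hgpos
    rwa [ha'', ht''] at h7
  have ha'e : a' ∣ e := hco.dvd_of_dvd_mul_right ⟨c₀, h5⟩
  have hkey : a' * (e * g / a) = e := by
    have h8 : e * g / a = e / a' := by
      rw [ha', Nat.mul_comm e g, Nat.mul_div_mul_left _ _ hgpos]
    rw [h8, Nat.mul_div_cancel' ha'e]
  -- u is a rotation of w
  obtain ⟨x, y, _, _, hxy1, hxy2⟩ := huw
  have hur : u = w.rotate y.length := by
    rw [hxy2, List.rotate_eq_drop_append_take (by simp), List.drop_left, List.take_left, hxy1]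
  set r := y.length with hr
  have hurot : u = wpow (w'.rotate (r % t)) e := by
    rw [hur, hw, rotate_wpow w' hw'ne e r, ht]
  constructor
  · -- membership
    refine ⟨wpow (w'.rotate (r % t)) a', ?_, ?_⟩
    · rw [length_wpow, List.length_rotate, ht]
      exact ⟨t', by rw [ha', ht']; ring⟩
    · rw [wpow_mul, hkey, ← hurot]
      exact ⟨u, [], hu, by simp, by simp, by simp⟩
  · -- upper bound
    rintro e' ⟨u', hau', c, d, hc, hd, hucd, hpow⟩
    have h1' : wpow u' e' = u.rotate c.length := by
      rw [hucd, List.rotate_eq_drop_append_take (by simp), List.drop_left, List.take_left, hpow]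
    have h2 : wpow u' e' = wpow (w'.rotate ((r + c.length) % t)) e := by
      rw [h1', hur, List.rotate_rotate, hw, rotate_wpow w' hw'ne, ht]
    set q := w'.rotate ((r + c.length) % t) with hqdef
    have hlq : q.length = t := by rw [hqdef, List.length_rotate, ht]
    have hlen2 : e' * u'.length = e * t := by
      have h9 := congrArg List.length h2
      rwa [length_wpow, length_wpow, hlq] at h9
    have hetpos : 0 < e * t := Nat.mul_pos he htpos
    have he'pos : 0 < e' := by
      rcases Nat.eq_zero_or_pos e' with h0 | h0
      · subst h0; simp at hlen2; omega
      · exact h0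
    have hu'pos : 0 < u'.length := by
      rcases Nat.eq_zero_or_pos u'.length with h0 | h0
      · rw [h0, Nat.mul_zero] at hlen2; omega
      · exact h0
    have hcomm := wpow_comm u' q e' e he'pos he h2
    obtain ⟨z, l, k, hzu, hzq⟩ := comm_wpow (u'.length + q.length) u' q le_rfl hcomm
    have hk1 : k = 1 := by
      apply hirr2 z k
      refine ⟨w'.take ((r + c.length) % t), w'.drop ((r + c.length) % t), one_dvd _, one_dvd _,
        (List.take_append_drop _ _).symm, ?_⟩
      rw [← hzq, hqdef]
      exact List.rotate_eq_drop_append_take (by rw [ht]; exact (Nat.mod_lt _ htpos).le)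
    have hqz : z = q := by rw [hzq, hk1, wpow_one]
    have hu'q : u' = wpow q l := by rw [hzu, hqz]
    have hlu' : u'.length = l * t := by rw [hu'q, length_wpow, hlq]
    have hlpos : 0 < l := by
      rcases Nat.eq_zero_or_pos l with h0 | h0
      · rw [h0, Nat.zero_mul] at hlu'; omega
      · exact h0
    have hel : e' * l = e := by
      have h10 : (e' * l) * t = e * t := by
        calc (e' * l) * t = e' * (l * t) := by ring
          _ = e' * u'.length := by rw [hlu']
          _ = e * t := hlen2
      exact Nat.eq_of_mul_eq_mul_right htpos h10
    have hadvd : a ∣ l * g := by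
      have h11 : a ∣ l * t := hlu' ▸ hau'
      have h12 : a ∣ l * a := dvd_mul_left a l
      have h13 := Nat.dvd_gcd h12 h11
      rwa [Nat.gcd_mul_left] at h13
    have hale : a ≤ l * g := Nat.le_of_dvd (Nat.mul_pos hlpos hgpos) hadvd
    rw [Nat.le_div_iff_mul_le ha]
    calc e' * a ≤ e' * (l * g) := Nat.mul_le_mul_left _ hale
      _ = (e' * l) * g := by ring
      _ = e * g := by rw [hel]
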